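/- Let A ∈ ℝ^{n×N}, τ, λ > 0 with τ‖A‖²_{2→2} ≤ 1, Y ∈ ℝ^{n×m}, and L ≥ 2. Then for any orthogonal matrices Φ₁, Φ₂ ∈ O(N), ‖f_{Φ₁}^L(Y) − f_{Φ₂}^L(Y)‖_F ≤ τ‖Y‖_F · L(L+3) · ‖AΦ₁ − AΦ₂‖_{2→2}. -/
import Mathlib

open MeasureTheory Matrix
open scoped ENNReal

noncomputable def soft (mu x : ℝ) : ℝ := Real.sign x * max 0 (|x| - mu)

noncomputable def softMat {a b : ℕ} (mu : ℝ) (M : Matrix (Fin a) (Fin b) ℝ) :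
    Matrix (Fin a) (Fin b) ℝ := Matrix.of fun i j => soft mu (M i j)

noncomputable def specNorm {a b : ℕ} (A : Matrix (Fin a) (Fin b) ℝ) : ℝ :=
  ‖LinearMap.toContinuousLinearMap (Matrix.toEuclideanLin A)‖

noncomputable def frobNorm {a b : ℕ} (A : Matrix (Fin a) (Fin b) ℝ) : ℝ :=
  Real.sqrt (∑ i, ∑ j, (A i j) ^ 2)

noncomputable def l2 {N : ℕ} (x : Fin N → ℝ) : ℝ := Real.sqrt (∑ i, x i ^ 2)

noncomputable def sigma {N : ℕ} (B : ℝ) (x : Fin N → ℝ) : Fin N → ℝ :=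
  if l2 x ≤ B then x else (B / l2 x) • x

noncomputable def sigmaMat {N m : ℕ} (B : ℝ) (M : Matrix (Fin N) (Fin m) ℝ) :
    Matrix (Fin N) (Fin m) ℝ := Matrix.of fun i j => sigma B (fun k => M k j) i

def IsOrthogonal {N : ℕ} (Φ : Matrix (Fin N) (Fin N) ℝ) : Prop := Φᵀ * Φ = 1

noncomputable def ista {n N m : ℕ} (A : Matrix (Fin n) (Fin N) ℝ) (τ lam : ℝ)
    (Φ : Matrix (Fin N) (Fin N) ℝ) (Y : Matrix (Fin n) (Fin m) ℝ) :
    ℕ → Matrix (Fin N) (Fin m) ℝ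
  | 0 => 0
  | l + 1 => softMat (τ * lam)
      ((1 - τ • (Φᵀ * Aᵀ * A * Φ)) * ista A τ lam Φ Y l + τ • ((A * Φ)ᵀ * Y))

noncomputable def istaVec {n N : ℕ} (A : Matrix (Fin n) (Fin N) ℝ) (τ lam : ℝ)
    (Φ : Matrix (Fin N) (Fin N) ℝ) (y : Fin n → ℝ) : ℕ → Fin N → ℝ
  | 0 => 0
  | l + 1 => soft (τ * lam) ∘
      ((1 - τ • (Φᵀ * Aᵀ * A * Φ)) *ᵥ istaVec A τ lam Φ y l + τ • ((A * Φ)ᵀ *ᵥ y))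

noncomputable def KL {n N m : ℕ} (A : Matrix (Fin n) (Fin N) ℝ) (τ : ℝ)
    (Y : Matrix (Fin n) (Fin m) ℝ) (L : ℕ) : ℝ :=
  τ * frobNorm Y * specNorm (1 - τ • (Aᵀ * A)) ^ (L - 1)
    + τ * frobNorm Y * ∑ l ∈ Finset.Icc 2 L,
        specNorm (1 - τ • (Aᵀ * A)) ^ (L - l) *
          (1 + 2 * τ * specNorm A ^ 2 *
            ∑ k ∈ Finset.range (l - 1), specNorm (1 - τ • (Aᵀ * A)) ^ k)

noncomputable def ML {n N m : ℕ} (A : Matrix (Fin n) (Fin N) ℝ) (τ : ℝ)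
    (Y : Matrix (Fin n) (Fin m) ℝ) (L : ℕ) : ℝ :=
  τ * specNorm A * frobNorm Y * ∑ k ∈ Finset.range L, specNorm (1 - τ • (Aᵀ * A)) ^ k

noncomputable def coveringNumber {α : Type*} (d : α → α → ℝ) (s : Set α) (ε : ℝ) : ℝ≥0∞ :=
  ⨅ (t : Finset α) (_ : ∀ x ∈ s, ∃ y ∈ t, d x y ≤ ε), (t.card : ℝ≥0∞)

section Aux
open scoped Matrix.Norms.L2Operator

lemma specNorm_eq' {a b : ℕ} (A : Matrix (Fin a) (Fin b) ℝ) : specNorm A = ‖A‖ := rfl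

lemma specNorm_nonneg' {a b : ℕ} (M : Matrix (Fin a) (Fin b) ℝ) : 0 ≤ specNorm M :=
  norm_nonneg _

lemma l2_eq_norm {N : ℕ} (x : Fin N → ℝ) :
    l2 x = ‖(EuclideanSpace.equiv (Fin N) ℝ).symm x‖ := by
  rw [EuclideanSpace.norm_eq]; simp [l2, sq_abs]

lemma l2_nonneg {N : ℕ} (x : Fin N → ℝ) : 0 ≤ l2 x := Real.sqrt_nonneg _

lemma l2_sq {N : ℕ} (x : Fin N → ℝ) : l2 x ^ 2 = ∑ i, x i ^ 2 :=
  Real.sq_sqrt (Finset.sum_nonneg fun _ _ => sq_nonneg _)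

lemma l2_mulVec_le {a b : ℕ} (M : Matrix (Fin a) (Fin b) ℝ) (x : Fin b → ℝ) :
    l2 (M *ᵥ x) ≤ specNorm M * l2 x := by
  rw [l2_eq_norm, l2_eq_norm, specNorm_eq']
  exact M.l2_opNorm_mulVec ((EuclideanSpace.equiv (Fin b) ℝ).symm x)

lemma specNorm_le_bound {a b : ℕ} (M : Matrix (Fin a) (Fin b) ℝ) {c : ℝ} (hc : 0 ≤ c)
    (h : ∀ x, l2 (M *ᵥ x) ≤ c * l2 x) : specNorm M ≤ c := by
  apply ContinuousLinearMap.opNorm_le_bound _ hc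
  intro x
  have := h x
  rw [l2_eq_norm, l2_eq_norm] at this
  exact this

lemma specNorm_transpose {a b : ℕ} (M : Matrix (Fin a) (Fin b) ℝ) :
    specNorm Mᵀ = specNorm M := by
  rw [specNorm_eq', specNorm_eq', ← Matrix.conjTranspose_eq_transpose_of_trivial]
  exact M.l2_opNorm_conjTranspose

lemma norm_orth_le {N : ℕ} {Φ : Matrix (Fin N) (Fin N) ℝ} (hΦ : IsOrthogonal Φ) :
    specNorm Φ ≤ 1 := by
  have h1 : specNorm (1 : Matrix (Fin N) (Fin N) ℝ) ≤ 1 := by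
    apply specNorm_le_bound _ zero_le_one
    intro x; rw [Matrix.one_mulVec, one_mul]
  have h2 : ‖Φᴴ * Φ‖ = ‖Φ‖ * ‖Φ‖ := Φ.l2_opNorm_conjTranspose_mul_self
  rw [Matrix.conjTranspose_eq_transpose_of_trivial, hΦ] at h2
  rw [specNorm_eq'] at h1 ⊢
  nlinarith [norm_nonneg Φ, h1, h2]

lemma specNorm_mul_le {a b c : ℕ} (M : Matrix (Fin a) (Fin b) ℝ)
    (P : Matrix (Fin b) (Fin c) ℝ) : specNorm (M * P) ≤ specNorm M * specNorm P := by
  rw [specNorm_eq', specNorm_eq', specNorm_eq']; exact M.l2_opNorm_mul P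

lemma specNorm_AΦ_le {n N : ℕ} (A : Matrix (Fin n) (Fin N) ℝ)
    {Φ : Matrix (Fin N) (Fin N) ℝ} (hΦ : IsOrthogonal Φ) :
    specNorm (A * Φ) ≤ specNorm A := by
  calc specNorm (A * Φ) ≤ specNorm A * specNorm Φ := specNorm_mul_le A Φ
  _ ≤ specNorm A * 1 := mul_le_mul_of_nonneg_left (norm_orth_le hΦ) (specNorm_nonneg' A)
  _ = specNorm A := mul_one _

lemma specNorm_smul {a b : ℕ} (c : ℝ) (hc : 0 ≤ c) (M : Matrix (Fin a) (Fin b) ℝ) :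
    specNorm (c • M) = c * specNorm M := by
  rw [specNorm_eq', specNorm_eq', norm_smul, Real.norm_eq_abs, abs_of_nonneg hc]

lemma spec_one_sub_le {n N : ℕ} {A : Matrix (Fin n) (Fin N) ℝ} {τ : ℝ}
    (hτ : 0 < τ) (hA : τ * specNorm A ^ 2 ≤ 1) {B : Matrix (Fin n) (Fin N) ℝ}
    (hB : specNorm B ≤ specNorm A) :
    specNorm (1 - τ • (Bᵀ * B)) ≤ 1 := by
  apply specNorm_le_bound _ zero_le_one
  intro x
  rw [one_mul]
  have hmv : (1 - τ • (Bᵀ * B)) *ᵥ x = x - τ • (Bᵀ *ᵥ (B *ᵥ x)) := by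
    rw [Matrix.sub_mulVec, Matrix.one_mulVec, Matrix.smul_mulVec,
      ← Matrix.mulVec_mulVec]
  rw [hmv]
  set u := B *ᵥ x with hu
  set w := Bᵀ *ᵥ u with hw
  have hdot : ∑ i, x i * w i = ∑ i, u i ^ 2 := by
    have : x ⬝ᵥ w = u ⬝ᵥ u := by
      rw [hw, Matrix.dotProduct_mulVec, Matrix.vecMul_transpose]
    simpa [dotProduct, sq] using this
  have hwb : l2 w ≤ specNorm A * l2 u := by
    calc l2 w ≤ specNorm Bᵀ * l2 u := l2_mulVec_le _ _
    _ ≤ specNorm A * l2 u := by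
        rw [specNorm_transpose]
        exact mul_le_mul_of_nonneg_right hB (l2_nonneg u)
  have hw2 : ∑ i, w i ^ 2 ≤ specNorm A ^ 2 * ∑ i, u i ^ 2 := by
    have := mul_self_le_mul_self (l2_nonneg w) hwb
    rw [← sq, ← sq, mul_pow] at this
    rw [← l2_sq, ← l2_sq]
    exact this
  have hu2 : (0:ℝ) ≤ ∑ i, u i ^ 2 := Finset.sum_nonneg fun _ _ => sq_nonneg _
  have key : ∑ i, (x i - τ * w i) ^ 2 ≤ ∑ i, x i ^ 2 := by
    have expand : ∑ i, (x i - τ * w i) ^ 2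
        = ∑ i, x i ^ 2 - 2 * τ * ∑ i, x i * w i + τ ^ 2 * ∑ i, w i ^ 2 := by
      rw [Finset.mul_sum, Finset.mul_sum, ← Finset.sum_sub_distrib, ← Finset.sum_add_distrib]
      congr 1; ext i; ring
    rw [expand, hdot]
    have h4 := mul_le_mul_of_nonneg_left hw2 (sq_nonneg τ)
    have h5 : τ * specNorm A ^ 2 * (τ * ∑ i, u i ^ 2) ≤ 1 * (τ * ∑ i, u i ^ 2) :=
      mul_le_mul_of_nonneg_right hA (mul_nonneg hτ.le hu2)
    nlinarith [mul_nonneg hτ.le hu2]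
  have : l2 (x - τ • w) ≤ l2 x := by
    apply Real.sqrt_le_sqrt
    simpa [Pi.sub_apply, Pi.smul_apply, smul_eq_mul] using key
  exact this

lemma soft_eq {mu : ℝ} (hmu : 0 ≤ mu) (t : ℝ) :
    soft mu t = t - max (-mu) (min mu t) := by
  unfold soft Real.sign
  split_ifs with h1 h2
  · simp only [abs_of_neg h1, max_def, min_def]
    split_ifs <;> linarith
  · simp only [abs_of_pos h2, max_def, min_def]
    split_ifs <;> linarith
  · have ht : t = 0 := le_antisymm (not_lt.1 h2) (not_lt.1 h1)
    subst ht
    simp only [abs_zero, max_def, min_def]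
    split_ifs <;> linarith

lemma soft_lip {mu : ℝ} (hmu : 0 ≤ mu) (x y : ℝ) :
    |soft mu x - soft mu y| ≤ |x - y| := by
  wlog h : y ≤ x with H
  · rw [abs_sub_comm, abs_sub_comm x y]
    exact H hmu y x (le_of_not_ge h)
  rw [abs_of_nonneg (by linarith : (0:ℝ) ≤ x - y), soft_eq hmu, soft_eq hmu, abs_le]
  constructor <;>
  · simp only [max_def, min_def]
    split_ifs <;> linarith

lemma soft_abs_le {mu : ℝ} (hmu : 0 ≤ mu) (x : ℝ) : |soft mu x| ≤ |x| := by
  have h0 : soft mu 0 = 0 := by simp [soft]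
  simpa [h0] using soft_lip hmu x 0

lemma frob_eq_norm {a b : ℕ} (M : Matrix (Fin a) (Fin b) ℝ) :
    frobNorm M = ‖(EuclideanSpace.equiv (Fin a × Fin b) ℝ).symm (fun p => M p.1 p.2)‖ := by
  rw [EuclideanSpace.norm_eq]
  simp [frobNorm, sq_abs, Fintype.sum_prod_type]

lemma frob_nonneg {a b : ℕ} (M : Matrix (Fin a) (Fin b) ℝ) : 0 ≤ frobNorm M :=
  Real.sqrt_nonneg _

lemma frob_add_le {a b : ℕ} (M P : Matrix (Fin a) (Fin b) ℝ) :
    frobNorm (M + P) ≤ frobNorm M + frobNorm P := by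
  rw [frob_eq_norm, frob_eq_norm, frob_eq_norm]
  exact norm_add_le ((EuclideanSpace.equiv (Fin a × Fin b) ℝ).symm (fun p => M p.1 p.2))
    ((EuclideanSpace.equiv (Fin a × Fin b) ℝ).symm (fun p => P p.1 p.2))

lemma frob_smul {a b : ℕ} {c : ℝ} (hc : 0 ≤ c) (M : Matrix (Fin a) (Fin b) ℝ) :
    frobNorm (c • M) = c * frobNorm M := by
  rw [frob_eq_norm, frob_eq_norm]
  have : ((EuclideanSpace.equiv (Fin a × Fin b) ℝ).symm (fun p => (c • M) p.1 p.2))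
      = c • ((EuclideanSpace.equiv (Fin a × Fin b) ℝ).symm (fun p => M p.1 p.2)) := rfl
  rw [this, norm_smul, Real.norm_eq_abs, abs_of_nonneg hc]

lemma frob_eq_cols {a b : ℕ} (M : Matrix (Fin a) (Fin b) ℝ) :
    frobNorm M = Real.sqrt (∑ j, l2 (fun i => M i j) ^ 2) := by
  simp only [frobNorm, l2_sq]
  rw [Finset.sum_comm]

lemma frob_mul_le {a b c : ℕ} (M : Matrix (Fin a) (Fin b) ℝ)
    (X : Matrix (Fin b) (Fin c) ℝ) :
    frobNorm (M * X) ≤ specNorm M * frobNorm X := by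
  rw [frob_eq_cols, frob_eq_cols]
  have hcol : ∀ j, (fun i => (M * X) i j) = M *ᵥ (fun i => X i j) := by
    intro j; funext i; rw [Matrix.mul_apply, Matrix.mulVec, dotProduct]
  calc Real.sqrt (∑ j, l2 (fun i => (M * X) i j) ^ 2)
      ≤ Real.sqrt (∑ j, (specNorm M * l2 (fun i => X i j)) ^ 2) := by
        apply Real.sqrt_le_sqrt
        apply Finset.sum_le_sum
        intro j _
        rw [hcol j]
        exact pow_le_pow_left₀ (l2_nonneg _) (l2_mulVec_le M _) 2
    _ = specNorm M * Real.sqrt (∑ j, l2 (fun i => X i j) ^ 2) := by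
        simp only [mul_pow, ← Finset.mul_sum]
        rw [Real.sqrt_mul (sq_nonneg _),
          Real.sqrt_sq (show (0:ℝ) ≤ specNorm M from norm_nonneg _)]

lemma frob_soft_sub_le {a b : ℕ} {mu : ℝ} (hmu : 0 ≤ mu)
    (M P : Matrix (Fin a) (Fin b) ℝ) :
    frobNorm (softMat mu M - softMat mu P) ≤ frobNorm (M - P) := by
  apply Real.sqrt_le_sqrt
  apply Finset.sum_le_sum; intro i _
  apply Finset.sum_le_sum; intro j _
  calc ((softMat mu M - softMat mu P) i j) ^ 2
      = |soft mu (M i j) - soft mu (P i j)| ^ 2 := by rw [sq_abs]; rfl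
    _ ≤ |M i j - P i j| ^ 2 :=
        pow_le_pow_left₀ (abs_nonneg _) (soft_lip hmu (M i j) (P i j)) 2
    _ = ((M - P) i j) ^ 2 := by rw [sq_abs]; rfl

lemma frob_soft_le {a b : ℕ} {mu : ℝ} (hmu : 0 ≤ mu) (M : Matrix (Fin a) (Fin b) ℝ) :
    frobNorm (softMat mu M) ≤ frobNorm M := by
  apply Real.sqrt_le_sqrt
  apply Finset.sum_le_sum; intro i _
  apply Finset.sum_le_sum; intro j _
  calc (softMat mu M i j) ^ 2 = |soft mu (M i j)| ^ 2 := by rw [sq_abs]; rfl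
    _ ≤ |M i j| ^ 2 := pow_le_pow_left₀ (abs_nonneg _) (soft_abs_le hmu _) 2
    _ = (M i j) ^ 2 := sq_abs _

lemma specNorm_add_le {a b : ℕ} (M P : Matrix (Fin a) (Fin b) ℝ) :
    specNorm (M + P) ≤ specNorm M + specNorm P := by
  rw [specNorm_eq', specNorm_eq', specNorm_eq']
  exact norm_add_le _ _

lemma specNorm_sub_rev {a b : ℕ} (M P : Matrix (Fin a) (Fin b) ℝ) :
    specNorm (M - P) = specNorm (P - M) := by
  rw [specNorm_eq', specNorm_eq']
  exact norm_sub_rev _ _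

end Aux

set_option maxHeartbeats 2000000 in
theorem statement7 {n N m : ℕ} (A : Matrix (Fin n) (Fin N) ℝ)
    (τ lam : ℝ) (hτ : 0 < τ) (hlam : 0 < lam) (hA : τ * specNorm A ^ 2 ≤ 1)
    (Y : Matrix (Fin n) (Fin m) ℝ) (L : ℕ) (hL : 2 ≤ L)
    (Φ₁ Φ₂ : Matrix (Fin N) (Fin N) ℝ) (hΦ₁ : IsOrthogonal Φ₁) (hΦ₂ : IsOrthogonal Φ₂) :
    frobNorm (ista A τ lam Φ₁ Y L - ista A τ lam Φ₂ Y L) ≤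
      τ * frobNorm Y * ((L : ℝ) * ((L : ℝ) + 3)) * specNorm (A * Φ₁ - A * Φ₂) := by
  have hmu : (0:ℝ) ≤ τ * lam := le_of_lt (mul_pos hτ hlam)
  set B₁ := A * Φ₁ with hB₁def
  set B₂ := A * Φ₂ with hB₂def
  set D := specNorm (B₁ - B₂) with hDdef
  have hD : 0 ≤ D := specNorm_nonneg' _
  have hAn : 0 ≤ specNorm A := specNorm_nonneg' _
  have hYn : 0 ≤ frobNorm Y := frob_nonneg _
  have hB₁ : specNorm B₁ ≤ specNorm A := specNorm_AΦ_le A hΦ₁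
  have hB₂ : specNorm B₂ ≤ specNorm A := specNorm_AΦ_le A hΦ₂
  have hS₁ : Φ₁ᵀ * Aᵀ * A * Φ₁ = B₁ᵀ * B₁ := by
    rw [hB₁def, Matrix.transpose_mul, Matrix.mul_assoc, Matrix.mul_assoc]
  have hS₂ : Φ₂ᵀ * Aᵀ * A * Φ₂ = B₂ᵀ * B₂ := by
    rw [hB₂def, Matrix.transpose_mul, Matrix.mul_assoc, Matrix.mul_assoc]
  have hP₁ : specNorm (1 - τ • (B₁ᵀ * B₁)) ≤ 1 := spec_one_sub_le hτ hA hB₁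
  have hP₂ : specNorm (1 - τ • (B₂ᵀ * B₂)) ≤ 1 := spec_one_sub_le hτ hA hB₂
  -- spec norm of difference of gram matrices
  have hT : specNorm (B₁ᵀ * B₁ - B₂ᵀ * B₂) ≤ 2 * specNorm A * D := by
    have hsplit : B₁ᵀ * B₁ - B₂ᵀ * B₂ = B₁ᵀ * (B₁ - B₂) + (B₁ - B₂)ᵀ * B₂ := by
      rw [Matrix.transpose_sub, Matrix.mul_sub, Matrix.sub_mul]
      abel
    rw [hsplit]
    calc specNorm (B₁ᵀ * (B₁ - B₂) + (B₁ - B₂)ᵀ * B₂)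
        ≤ specNorm (B₁ᵀ * (B₁ - B₂)) + specNorm ((B₁ - B₂)ᵀ * B₂) := specNorm_add_le _ _
      _ ≤ specNorm B₁ᵀ * D + specNorm (B₁ - B₂)ᵀ * specNorm B₂ := by
          exact add_le_add (specNorm_mul_le _ _) (specNorm_mul_le _ _)
      _ ≤ specNorm A * D + D * specNorm A := by
          rw [specNorm_transpose, specNorm_transpose]
          exact add_le_add (mul_le_mul_of_nonneg_right hB₁ hD)
            (mul_le_mul_of_nonneg_left hB₂ hD)
      _ = 2 * specNorm A * D := by ring
  -- bound on the iterates
  have hbnd : ∀ l : ℕ, frobNorm (ista A τ lam Φ₂ Y l)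
      ≤ (l : ℝ) * (τ * specNorm A * frobNorm Y) := by
    intro l
    induction l with
    | zero => simp [ista, frobNorm]
    | succ l ih =>
      have hrec : ista A τ lam Φ₂ Y (l + 1) = softMat (τ * lam)
          ((1 - τ • (Φ₂ᵀ * Aᵀ * A * Φ₂)) * ista A τ lam Φ₂ Y l + τ • ((A * Φ₂)ᵀ * Y)) := rfl
      rw [hrec]
      have step1 := frob_soft_le hmu
        ((1 - τ • (Φ₂ᵀ * Aᵀ * A * Φ₂)) * ista A τ lam Φ₂ Y l + τ • ((A * Φ₂)ᵀ * Y))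
      have step2 := frob_add_le ((1 - τ • (Φ₂ᵀ * Aᵀ * A * Φ₂)) * ista A τ lam Φ₂ Y l)
        (τ • ((A * Φ₂)ᵀ * Y))
      have step3 : frobNorm ((1 - τ • (Φ₂ᵀ * Aᵀ * A * Φ₂)) * ista A τ lam Φ₂ Y l)
          ≤ frobNorm (ista A τ lam Φ₂ Y l) := by
        calc frobNorm ((1 - τ • (Φ₂ᵀ * Aᵀ * A * Φ₂)) * ista A τ lam Φ₂ Y l)
            ≤ specNorm (1 - τ • (Φ₂ᵀ * Aᵀ * A * Φ₂)) * frobNorm (ista A τ lam Φ₂ Y l) :=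
              frob_mul_le _ _
          _ ≤ 1 * frobNorm (ista A τ lam Φ₂ Y l) := by
              rw [hS₂]
              exact mul_le_mul_of_nonneg_right hP₂ (frob_nonneg _)
          _ = frobNorm (ista A τ lam Φ₂ Y l) := one_mul _
      have step4 : frobNorm (τ • ((A * Φ₂)ᵀ * Y)) ≤ τ * specNorm A * frobNorm Y := by
        rw [frob_smul hτ.le]
        have : frobNorm ((A * Φ₂)ᵀ * Y) ≤ specNorm A * frobNorm Y := by
          calc frobNorm ((A * Φ₂)ᵀ * Y) ≤ specNorm (A * Φ₂)ᵀ * frobNorm Y := frob_mul_le _ _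
            _ ≤ specNorm A * frobNorm Y := by
                rw [specNorm_transpose]
                exact mul_le_mul_of_nonneg_right hB₂ hYn
        calc τ * frobNorm ((A * Φ₂)ᵀ * Y) ≤ τ * (specNorm A * frobNorm Y) :=
              mul_le_mul_of_nonneg_left this hτ.le
          _ = τ * specNorm A * frobNorm Y := by ring
      push_cast
      nlinarith [ih, step1, step2, step3, step4]
  -- main difference bound
  have hg : ∀ l : ℕ, frobNorm (ista A τ lam Φ₁ Y l - ista A τ lam Φ₂ Y l)
      ≤ (l : ℝ) ^ 2 * (τ * frobNorm Y * D) := by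
    intro l
    induction l with
    | zero => simp [ista, frobNorm]
    | succ l ih =>
      set F₁ := ista A τ lam Φ₁ Y l with hF₁
      set F₂ := ista A τ lam Φ₂ Y l with hF₂
      have hrec : ista A τ lam Φ₁ Y (l + 1) - ista A τ lam Φ₂ Y (l + 1)
          = softMat (τ * lam) ((1 - τ • (B₁ᵀ * B₁)) * F₁ + τ • (B₁ᵀ * Y))
            - softMat (τ * lam) ((1 - τ • (B₂ᵀ * B₂)) * F₂ + τ • (B₂ᵀ * Y)) := by
        show softMat (τ * lam) ((1 - τ • (Φ₁ᵀ * Aᵀ * A * Φ₁)) * F₁ + τ • ((A * Φ₁)ᵀ * Y))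
              - softMat (τ * lam) ((1 - τ • (Φ₂ᵀ * Aᵀ * A * Φ₂)) * F₂ + τ • ((A * Φ₂)ᵀ * Y)) = _
        rw [hS₁, hS₂]
      have hWsplit : ((1 - τ • (B₁ᵀ * B₁)) * F₁ + τ • (B₁ᵀ * Y))
          - ((1 - τ • (B₂ᵀ * B₂)) * F₂ + τ • (B₂ᵀ * Y))
          = (1 - τ • (B₁ᵀ * B₁)) * (F₁ - F₂)
            + (τ • (B₂ᵀ * B₂ - B₁ᵀ * B₁)) * F₂
            + τ • ((B₁ - B₂)ᵀ * Y) := by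
        simp only [Matrix.sub_mul, Matrix.mul_sub, Matrix.one_mul, Matrix.smul_mul,
          smul_sub, Matrix.transpose_sub]
        abel
      rw [hrec]
      have h0 := frob_soft_sub_le hmu
        ((1 - τ • (B₁ᵀ * B₁)) * F₁ + τ • (B₁ᵀ * Y))
        ((1 - τ • (B₂ᵀ * B₂)) * F₂ + τ • (B₂ᵀ * Y))
      rw [hWsplit] at h0
      have h1 := frob_add_le
        ((1 - τ • (B₁ᵀ * B₁)) * (F₁ - F₂) + (τ • (B₂ᵀ * B₂ - B₁ᵀ * B₁)) * F₂)
        (τ • ((B₁ - B₂)ᵀ * Y))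
      have h2 := frob_add_le ((1 - τ • (B₁ᵀ * B₁)) * (F₁ - F₂))
        ((τ • (B₂ᵀ * B₂ - B₁ᵀ * B₁)) * F₂)
      have hT₁ : frobNorm ((1 - τ • (B₁ᵀ * B₁)) * (F₁ - F₂)) ≤ frobNorm (F₁ - F₂) := by
        calc frobNorm ((1 - τ • (B₁ᵀ * B₁)) * (F₁ - F₂))
            ≤ specNorm (1 - τ • (B₁ᵀ * B₁)) * frobNorm (F₁ - F₂) := frob_mul_le _ _
          _ ≤ 1 * frobNorm (F₁ - F₂) := mul_le_mul_of_nonneg_right hP₁ (frob_nonneg _)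
          _ = frobNorm (F₁ - F₂) := one_mul _
      have hT₂ : frobNorm ((τ • (B₂ᵀ * B₂ - B₁ᵀ * B₁)) * F₂)
          ≤ τ * (2 * specNorm A * D) * ((l : ℝ) * (τ * specNorm A * frobNorm Y)) := by
        calc frobNorm ((τ • (B₂ᵀ * B₂ - B₁ᵀ * B₁)) * F₂)
            ≤ specNorm (τ • (B₂ᵀ * B₂ - B₁ᵀ * B₁)) * frobNorm F₂ := frob_mul_le _ _
          _ = τ * specNorm (B₂ᵀ * B₂ - B₁ᵀ * B₁) * frobNorm F₂ := by
              rw [specNorm_smul τ hτ.le]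
          _ ≤ τ * (2 * specNorm A * D) * ((l : ℝ) * (τ * specNorm A * frobNorm Y)) := by
              rw [specNorm_sub_rev]
              apply mul_le_mul
              · exact mul_le_mul_of_nonneg_left hT hτ.le
              · exact hbnd l
              · exact frob_nonneg _
              · exact mul_nonneg hτ.le (mul_nonneg (mul_nonneg (by norm_num) hAn) hD)
      have hT₃ : frobNorm (τ • ((B₁ - B₂)ᵀ * Y)) ≤ τ * D * frobNorm Y := by
        rw [frob_smul hτ.le]
        have : frobNorm ((B₁ - B₂)ᵀ * Y) ≤ D * frobNorm Y := by
          calc frobNorm ((B₁ - B₂)ᵀ * Y) ≤ specNorm (B₁ - B₂)ᵀ * frobNorm Y :=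
                frob_mul_le _ _
            _ = D * frobNorm Y := by rw [specNorm_transpose]
        calc τ * frobNorm ((B₁ - B₂)ᵀ * Y) ≤ τ * (D * frobNorm Y) :=
              mul_le_mul_of_nonneg_left this hτ.le
          _ = τ * D * frobNorm Y := by ring
      have hl0 : (0:ℝ) ≤ (l:ℝ) := Nat.cast_nonneg l
      have hkey : τ * (2 * specNorm A * D) * ((l : ℝ) * (τ * specNorm A * frobNorm Y))
          ≤ 2 * (l : ℝ) * (τ * frobNorm Y * D) := by
        have hfact : τ * (2 * specNorm A * D) * ((l : ℝ) * (τ * specNorm A * frobNorm Y))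
            = (τ * specNorm A ^ 2) * (2 * (l:ℝ) * (τ * frobNorm Y * D)) := by ring
        rw [hfact]
        have h2l : (0:ℝ) ≤ 2 * (l:ℝ) * (τ * frobNorm Y * D) :=
          mul_nonneg (mul_nonneg (by norm_num) hl0)
            (mul_nonneg (mul_nonneg hτ.le hYn) hD)
        calc (τ * specNorm A ^ 2) * (2 * (l:ℝ) * (τ * frobNorm Y * D))
            ≤ 1 * (2 * (l:ℝ) * (τ * frobNorm Y * D)) := mul_le_mul_of_nonneg_right hA h2l
          _ = 2 * (l:ℝ) * (τ * frobNorm Y * D) := one_mul _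
      have hcast : ((l + 1 : ℕ) : ℝ) = (l : ℝ) + 1 := by push_cast; ring
      rw [hcast]
      have htDY : (0:ℝ) ≤ τ * frobNorm Y * D :=
        mul_nonneg (mul_nonneg hτ.le hYn) hD
      have hsq : ((l:ℝ) + 1) ^ 2 * (τ * frobNorm Y * D)
          = (l:ℝ) ^ 2 * (τ * frobNorm Y * D) + 2 * (l:ℝ) * (τ * frobNorm Y * D)
            + τ * frobNorm Y * D := by ring
      rw [hsq]
      linarith [ih, h0, h1, h2, hT₁, hT₂, hT₃, hkey]
  have hgL := hg L
  have hL0 : (0:ℝ) ≤ (L:ℝ) := Nat.cast_nonneg L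
  have htDY : (0:ℝ) ≤ τ * frobNorm Y * D :=
    mul_nonneg (mul_nonneg hτ.le hYn) hD
  calc frobNorm (ista A τ lam Φ₁ Y L - ista A τ lam Φ₂ Y L)
      ≤ (L : ℝ) ^ 2 * (τ * frobNorm Y * D) := hgL
    _ ≤ τ * frobNorm Y * ((L : ℝ) * ((L : ℝ) + 3)) * D := by
        have h3L : (0:ℝ) ≤ 3 * (L:ℝ) * (τ * frobNorm Y * D) :=
          mul_nonneg (mul_nonneg (by norm_num) hL0) htDY
        have hexp : τ * frobNorm Y * ((L : ℝ) * ((L : ℝ) + 3)) * D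
            = (L : ℝ) ^ 2 * (τ * frobNorm Y * D) + 3 * (L:ℝ) * (τ * frobNorm Y * D) := by
          ring
        linarith
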